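/- Suppose a¹, …, a^{n−1} : ℝ → ℝ are differentiable at t₀ with a^{i'}(t₀) = 0 and (a^{i'})'(t₀) = 2 S(e_{i'}, e_n) for each i' = 1, …, n−1, and set w(t) = e_n + ∑_{j'=1}^{n−1} a^{j'}(t) e_{j'} and b(t) = √(g(t)(w(t), w(t))). Then b is differentiable at t₀ with b(t₀) = 1 and b'(t₀) = −S(e_n, e_n). (This is the computation db/dt = −Ric_{nn} in Part A of the paper's boundary-term analysis.) -/

import Mathlib

/-!
Write `w(t) = e_n + x(t)` with `x(t) = ∑ a^{j'}(t) e_{j'}`, so `x(t₀) = 0`. In the expansion of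
`g(t)(w, w)` the term `g(t)(x, x)` is a product of two factors vanishing at `t₀`, and the cross terms
differentiate to `(a^{j'})'(t₀) g(t₀)(e_{j'}, e_n) = 0` by orthonormality. Hence
`(g(t)(w, w))'(t₀) = g'(t₀)(e_n, e_n) = -2 S(e_n, e_n)`, and the chain rule for `√` at the value `1`
halves this.
-/

section

variable {ι E : Type*} [Fintype ι] [AddCommGroup E] [Module ℝ E] {t₀ : ℝ}

theorem hasDerivAt_sum_mul_of_eq_zero {a h : ι → ℝ → ℝ} {a' h' : ι → ℝ}
    (ha₀ : ∀ i, a i t₀ = 0) (ha : ∀ i, HasDerivAt (a i) (a' i) t₀)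
    (hh : ∀ i, HasDerivAt (h i) (h' i) t₀) :
    HasDerivAt (fun t => ∑ i, a i t * h i t) (∑ i, a' i * h i t₀) t₀ := by
  refine (HasDerivAt.fun_sum fun i _ => (ha i).mul (hh i)).congr_deriv ?_
  simp [ha₀]

variable {g : ℝ → LinearMap.BilinForm ℝ E} {D : E → E → ℝ} {a : ι → ℝ → ℝ} {a' : ι → ℝ}
  {u : ι → E}

theorem hasDerivAt_bilin_sum_smul_left (hg : ∀ x y, HasDerivAt (fun t => g t x y) (D x y) t₀)
    (ha₀ : ∀ i, a i t₀ = 0) (ha : ∀ i, HasDerivAt (a i) (a' i) t₀) (y : E) :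
    HasDerivAt (fun t => g t (∑ i, a i t • u i) y) (∑ i, a' i * g t₀ (u i) y) t₀ := by
  simp only [map_sum, map_smul, LinearMap.sum_apply, LinearMap.smul_apply, smul_eq_mul]
  exact hasDerivAt_sum_mul_of_eq_zero ha₀ ha fun i => hg (u i) y

theorem hasDerivAt_bilin_sum_smul_right (hg : ∀ x y, HasDerivAt (fun t => g t x y) (D x y) t₀)
    (ha₀ : ∀ i, a i t₀ = 0) (ha : ∀ i, HasDerivAt (a i) (a' i) t₀) (x : E) :
    HasDerivAt (fun t => g t x (∑ i, a i t • u i)) (∑ i, a' i * g t₀ x (u i)) t₀ := by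
  simp only [map_sum, map_smul, smul_eq_mul]
  exact hasDerivAt_sum_mul_of_eq_zero ha₀ ha fun i => hg x (u i)

theorem hasDerivAt_bilin_add_sum_smul_self
    (hg : ∀ x y, HasDerivAt (fun t => g t x y) (D x y) t₀)
    (ha₀ : ∀ i, a i t₀ = 0) (ha : ∀ i, HasDerivAt (a i) (a' i) t₀) (v : E) :
    HasDerivAt (fun t => g t (v + ∑ i, a i t • u i) (v + ∑ i, a i t • u i))
      (D v v + ∑ i, a' i * (g t₀ (u i) v + g t₀ v (u i))) t₀ := by
  set x : ℝ → E := fun t => ∑ i, a i t • u i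
  have hexpand : ∀ t, g t (v + x t) (v + x t)
      = g t v v + g t (x t) v + g t v (x t) + ∑ i, a i t * g t (u i) (x t) := by
    intro t
    simp only [map_add, LinearMap.add_apply]
    rw [show x t = ∑ i, a i t • u i from rfl, map_sum (g t)]
    simp only [LinearMap.sum_apply, map_smul, LinearMap.smul_apply, smul_eq_mul]
    ring
  have hquad : HasDerivAt (fun t => ∑ i, a i t * g t (u i) (x t)) 0 t₀ := by
    refine (hasDerivAt_sum_mul_of_eq_zero ha₀ ha fun i =>
      hasDerivAt_bilin_sum_smul_right hg ha₀ ha (u i)).congr_deriv ?_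
    simp [ha₀]
  refine ((((hg v v).add (hasDerivAt_bilin_sum_smul_left hg ha₀ ha v)).add
    (hasDerivAt_bilin_sum_smul_right hg ha₀ ha v)).add hquad).congr_of_eventuallyEq
      (Filter.Eventually.of_forall hexpand) |>.congr_deriv ?_
  simp only [mul_add, Finset.sum_add_distrib]
  ring

end

/-- Part A of the boundary-term analysis: with `w(t) = e_n + ∑_{j'} a^{j'}(t) e_{j'}`,
`a^{i'}(t₀) = 0` and `(a^{i'})'(t₀) = 2 S(e_{i'}, e_n)`, the length
`b(t) = √(g(t)(w(t), w(t)))` satisfies `b(t₀) = 1` and `b'(t₀) = −S(e_n, e_n)`. -/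
theorem deriv_normal_length
    (n : ℕ) (hn : 2 ≤ n) (t₀ : ℝ)
    (g : ℝ → LinearMap.BilinForm ℝ (Fin n → ℝ))
    (S : LinearMap.BilinForm ℝ (Fin n → ℝ))
    (hgderiv : ∀ v w, HasDerivAt (fun t => g t v w) (-2 * S v w) t₀)
    (e : Fin n → (Fin n → ℝ))
    (honb : ∀ i j, g t₀ (e i) (e j) = if i = j then 1 else 0)
    (a : Fin (n - 1) → ℝ → ℝ)
    (ha0 : ∀ i, a i t₀ = 0)
    (haderiv : ∀ i : Fin (n - 1),
      HasDerivAt (a i)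
        (2 * S (e (Fin.castLE (Nat.sub_le n 1) i)) (e ⟨n - 1, by omega⟩)) t₀)
    (w : ℝ → (Fin n → ℝ))
    (hw : ∀ t, w t = e ⟨n - 1, by omega⟩
            + ∑ j : Fin (n - 1), a j t • e (Fin.castLE (Nat.sub_le n 1) j))
    (b : ℝ → ℝ)
    (hb : ∀ t, b t = Real.sqrt (g t (w t) (w t))) :
    b t₀ = 1 ∧ HasDerivAt b (-(S (e ⟨n - 1, by omega⟩) (e ⟨n - 1, by omega⟩))) t₀ := by
  set N : Fin n := ⟨n - 1, by omega⟩
  have htangent_ne : ∀ j : Fin (n - 1), Fin.castLE (Nat.sub_le n 1) j ≠ N := fun j h => by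
    have := congrArg Fin.val h
    simp only [Fin.val_castLE, N] at this
    omega
  have hw₀ : g t₀ (w t₀) (w t₀) = 1 := by simp [hw, ha0, honb]
  have hsq : HasDerivAt (fun t => g t (w t) (w t)) (-2 * S (e N) (e N)) t₀ := by
    simp only [hw]
    refine (hasDerivAt_bilin_add_sum_smul_self hgderiv ha0 haderiv (e N)).congr_deriv ?_
    simp [honb, htangent_ne, Ne.symm (htangent_ne _)]
  refine ⟨by rw [hb, hw₀, Real.sqrt_one], ?_⟩
  rw [show b = _ from funext hb]
  refine (hsq.sqrt (by simp [hw₀])).congr_deriv ?_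
  rw [hw₀, Real.sqrt_one]
  ring
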